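/- arXiv:2504.17831 — 2 statements merged into one kernel-verified Lean document; each statement's English description precedes it below -/
import Mathlib

section
/- Let 𝒞 be a treeset on a set X, and for x ∈ X define ρ(x) = {C ∈ 𝒞 : x ∈ C}. Then (i) ρ(x) ∈ V_𝒞 for every x ∈ X, and (ii) for all x, y ∈ X, the path-metric distance in (V_𝒞, T_𝒞) satisfies d_{T_𝒞}(ρ(x), ρ(y)) = |{C ∈ 𝒞 : x ∈ C, y ∉ C}|. -/
open Set

/-- A family of sets is *nested* if for any two members, one of the four
intersections of the sets or their complements is empty. -/
def Nested {X : Type*} (𝒞 : Set (Set X)) : Prop :=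
  ∀ C ∈ 𝒞, ∀ D ∈ 𝒞, C ∩ D = ∅ ∨ C ∩ Dᶜ = ∅ ∨ Cᶜ ∩ D = ∅ ∨ Cᶜ ∩ Dᶜ = ∅

/-- A *treeset* on `X`: a family of nonempty proper subsets of `X` that is nested,
closed under complementation and finitely separating. -/
def Treeset {X : Type*} (𝒞 : Set (Set X)) : Prop :=
  (∀ C ∈ 𝒞, C.Nonempty ∧ C ≠ Set.univ) ∧
  Nested 𝒞 ∧
  (∀ C ∈ 𝒞, Cᶜ ∈ 𝒞) ∧
  (∀ x y : X, {C | C ∈ 𝒞 ∧ x ∈ C ∧ y ∉ C}.Finite)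

/-- The vertices `V_𝒞` of the structure tree: subsets `u ⊆ 𝒞` satisfying (U1)–(U3). -/
def IsVertex {X : Type*} (𝒞 : Set (Set X)) (u : Set (Set X)) : Prop :=
  u ⊆ 𝒞 ∧
  (∀ C ∈ 𝒞, Xor' (C ∈ u) (Cᶜ ∈ u)) ∧
  (∀ C ∈ u, ∀ D ∈ 𝒞, C ⊆ D → D ∈ u) ∧
  ¬ ∃ f : ℕ → Set X, (∀ n, f n ∈ u) ∧ ∀ n, f (n + 1) ⊂ f n

/-- A *walk* of length `n` in the (directed presentation of the) edge set `E`. -/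
def IsWalk {α : Type*} (E : Set (α × α)) (f : ℕ → α) (n : ℕ) : Prop :=
  ∀ i < n, (f i, f (i + 1)) ∈ E

/-- Two points are joined by an `E`-path. -/
def Reach {α : Type*} (E : Set (α × α)) (x y : α) : Prop :=
  ∃ (n : ℕ) (f : ℕ → α), f 0 = x ∧ f n = y ∧ IsWalk E f n

/-- The extended path metric `d_E` of a graph, with values in `ℕ∞` (`∞` if no path exists). -/
noncomputable def graphDist {α : Type*} (E : Set (α × α)) (x y : α) : ℕ∞ :=
  sInf {d : ℕ∞ | ∃ (n : ℕ) (f : ℕ → α), d = (n : ℕ∞) ∧ f 0 = x ∧ f n = y ∧ IsWalk E f n}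

/-- A graph is *acyclic* if it has no injective cycle (of length at least 3,
i.e. not doubling back along a single edge). -/
def Acyclic {α : Type*} (E : Set (α × α)) : Prop :=
  ¬ ∃ (f : ℕ → α) (n : ℕ), 3 ≤ n ∧ IsWalk E f n ∧ f n = f 0 ∧
      ∀ i j, i < n → j < n → f i = f j → i = j

/-- The edge set `T_𝒞` of the structure tree on `V_𝒞`. -/
def TEdges {X : Type*} (𝒞 : Set (Set X)) : Set (Set (Set X) × Set (Set X)) :=
  {p | IsVertex 𝒞 p.1 ∧ IsVertex 𝒞 p.2 ∧ ∃ C, p.1 \ p.2 = {C}}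

/-! `ρ(x)` is a vertex: (U1) and (U2) are immediate, and an infinite descending chain
`C₀ ⊋ C₁ ⊋ ⋯` in `ρ(x)` would give infinitely many sets `Cₙ₊₁` separating `x` from a point of
`C₀ ∖ C₁`. Every edge of `T_𝒞` removes exactly one set from a vertex, so a walk from `ρ(x)` to
`ρ(y)` has length at least `|ρ(x) ∖ ρ(y)|`. Conversely, for vertices `u`, `w` with `u ∖ w` finite,
replacing an inclusion-minimal `C ∈ u ∖ w` by `Cᶜ` is an edge of `T_𝒞` that shrinks `u ∖ w` by
exactly `C`, so iterating gives a walk of length exactly `|u ∖ w|`. -/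

section Walks

variable {α : Type*} {E : Set (α × α)}

lemma IsWalk.cons {f : ℕ → α} {n : ℕ} {a : α} (ha : (a, f 0) ∈ E) (hf : IsWalk E f n) :
    IsWalk E (fun | 0 => a | i + 1 => f i) (n + 1)
  | 0, _ => ha
  | i + 1, hi => hf i (by omega)

lemma graphDist_le_of_isWalk {f : ℕ → α} {n : ℕ} (hf : IsWalk E f n) :
    graphDist E (f 0) (f n) ≤ n :=
  sInf_le ⟨n, f, rfl, rfl, rfl, hf⟩

lemma le_graphDist {a b : α} {d : ℕ∞}
    (h : ∀ n (f : ℕ → α), f 0 = a → f n = b → IsWalk E f n → d ≤ n) : d ≤ graphDist E a b :=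
  le_sInf <| by rintro _ ⟨n, f, rfl, h0, hn, hf⟩; exact h n f h0 hn hf

lemma encard_sdiff_le_of_isWalk {E : Set (Set α × Set α)}
    (hE : ∀ p ∈ E, (p.1 \ p.2).encard ≤ 1) {f : ℕ → Set α} :
    ∀ {n : ℕ}, IsWalk E f n → (f 0 \ f n).encard ≤ n
  | 0, _ => by simp
  | n + 1, hf => calc
      (f 0 \ f (n + 1)).encard ≤ (f 0 \ f n).encard + (f n \ f (n + 1)).encard :=
        (encard_le_encard (sdiff_triangle _ _ _)).trans (encard_union_le _ _)
      _ ≤ n + 1 := add_le_add (encard_sdiff_le_of_isWalk hE fun i hi => hf i (by omega))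
        (hE _ (hf n n.lt_succ_self))

end Walks

lemma not_exists_ssubset_chain_iff_wellFoundedOn {α : Type*} {u : Set (Set α)} :
    (¬ ∃ f : ℕ → Set α, (∀ n, f n ∈ u) ∧ ∀ n, f (n + 1) ⊂ f n) ↔ u.WellFoundedOn (· ⊂ ·) := by
  rw [wellFoundedOn_iff_no_descending_seq]
  constructor
  · rintro h f hf
    exact h ⟨f, hf, fun n => f.map_rel_iff.2 n.lt_succ_self⟩
  · rintro h ⟨f, hf, hdesc⟩
    exact h (RelEmbedding.natGT f hdesc) hf

section StructureTree

variable {X : Type*} {𝒞 : Set (Set X)} {u w : Set (Set X)} {C : Set X}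

lemma isVertex_rho (hcompl : ∀ C ∈ 𝒞, Cᶜ ∈ 𝒞)
    (hsep : ∀ x y : X, {C | C ∈ 𝒞 ∧ x ∈ C ∧ y ∉ C}.Finite) (x : X) :
    IsVertex 𝒞 {C | C ∈ 𝒞 ∧ x ∈ C} := by
  refine ⟨fun C hC => hC.1, fun C hC => ?_, fun C hC D hD hCD => ⟨hD, hCD hC.2⟩, ?_⟩
  · by_cases hx : x ∈ C
    · exact Or.inl ⟨⟨hC, hx⟩, fun h => h.2 hx⟩
    · exact Or.inr ⟨⟨hcompl C hC, hx⟩, fun h => hx h.2⟩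
  · rintro ⟨f, hf, hdesc⟩
    have hanti : StrictAnti f := strictAnti_nat_of_succ_lt hdesc
    obtain ⟨z, -, hz⟩ := exists_of_ssubset (hdesc 0)
    refine (hsep x z).not_infinite <| infinite_of_injective_forall_mem
      (hanti.injective.comp (add_left_injective 1)) fun n => ?_
    exact ⟨(hf _).1, (hf _).2, fun hzf => hz (hanti.antitone (by omega : 1 ≤ n + 1) hzf)⟩

namespace IsVertex

lemma compl_mem_iff (hu : IsVertex 𝒞 u) (hC : C ∈ 𝒞) : Cᶜ ∈ u ↔ C ∉ u :=
  (xor_iff_not_iff'.1 (hu.2.1 C hC)).symm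

lemma eq_of_subset (hu : IsVertex 𝒞 u) (hw : IsVertex 𝒞 w) (h : u ⊆ w) : u = w := by
  refine h.antisymm fun D hD => ?_
  by_contra hDu
  exact (hw.compl_mem_iff (hw.1 hD)).1 (h ((hu.compl_mem_iff (hw.1 hD)).2 hDu)) hD

lemma compl_notMem (hu : IsVertex 𝒞 u) (hC : C ∈ u) : Cᶜ ∉ u :=
  fun h => (hu.compl_mem_iff (hu.1 hC)).1 h hC

end IsVertex

def flipAt (u : Set (Set X)) (C : Set X) : Set (Set X) := insert Cᶜ (u \ {C})

lemma isVertex_flipAt (hcompl : ∀ D ∈ 𝒞, Dᶜ ∈ 𝒞) (hu : IsVertex 𝒞 u)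
    (hC : Minimal (· ∈ u) C) (hCuniv : C ≠ univ) : IsVertex 𝒞 (flipAt u C) := by
  have hC𝒞 : C ∈ 𝒞 := hu.1 hC.1
  have hCc : Cᶜ ∉ u := hu.compl_notMem hC.1
  have hCne : C ≠ Cᶜ := fun h => hCc (h ▸ hC.1)
  refine ⟨?_, fun D hD => xor_iff_not_iff'.2 ?_, ?_, ?_⟩
  · rintro D (rfl | ⟨hD, -⟩)
    exacts [hcompl C hC𝒞, hu.1 hD]
  · rcases eq_or_ne D C with rfl | hDC
    · simp [flipAt, hCne]
    rcases eq_or_ne D Cᶜ with rfl | hDCc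
    · simp [flipAt, hCne, hCne.symm]
    have hDc : Dᶜ ≠ Cᶜ := compl_injective.ne hDC
    have hDc' : Dᶜ ≠ C := fun h => hDCc (by rw [← h, compl_compl])
    simp [flipAt, hDC, hDCc, hDc, hDc', hu.compl_mem_iff hD]
  · rintro D (rfl | ⟨hD, hDC⟩) E hE hDE
    · by_cases hEC : E = Cᶜ
      · exact .inl hEC
      refine .inr ⟨?_, ?_⟩
      · by_contra hEu
        have hEc : Eᶜ ∈ u := (hu.compl_mem_iff hE).2 hEu
        exact hEC (by rw [← hC.eq_of_le hEc (compl_subset_comm.1 hDE), compl_compl])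
      · rintro rfl
        exact hCuniv (compl_le_self.1 hDE)
    · exact .inr ⟨hu.2.2.1 D hD E hE hDE, fun hEC => hDC (hC.eq_of_le hD (hEC ▸ hDE))⟩
  · have hu3 := hu.2.2.2
    rw [not_exists_ssubset_chain_iff_wellFoundedOn] at hu3 ⊢
    simpa [flipAt] using hu3

lemma mk_flipAt_mem_tEdges (hcompl : ∀ D ∈ 𝒞, Dᶜ ∈ 𝒞) (hu : IsVertex 𝒞 u)
    (hC : Minimal (· ∈ u) C) (hCuniv : C ≠ univ) : (u, flipAt u C) ∈ TEdges 𝒞 := by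
  refine ⟨hu, isVertex_flipAt hcompl hu hC hCuniv, C, ?_⟩
  have hCne : C ≠ Cᶜ := fun h => hu.compl_notMem hC.1 (h ▸ hC.1)
  ext D
  simp only [flipAt, mem_sdiff, mem_insert_iff, mem_singleton_iff, not_or, not_and, not_not]
  constructor
  · rintro ⟨hD, -, h⟩
    exact h hD
  · rintro rfl
    exact ⟨hC.1, hCne, fun _ => rfl⟩

lemma IsVertex.exists_isWalk_of_encard_sdiff (hcompl : ∀ D ∈ 𝒞, Dᶜ ∈ 𝒞)
    (hproper : ∀ D ∈ 𝒞, D ≠ univ) (hw : IsVertex 𝒞 w) :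
    ∀ (n : ℕ) {u : Set (Set X)}, IsVertex 𝒞 u → (u \ w).encard = n →
      ∃ f : ℕ → Set (Set X), f 0 = u ∧ f n = w ∧ IsWalk (TEdges 𝒞) f n
  | 0, u, hu, h => ⟨fun _ => u, rfl, hu.eq_of_subset hw (sdiff_eq_empty.1 (encard_eq_zero.1 h)),
      fun _ hi => absurd hi (Nat.not_lt_zero _)⟩
  | n + 1, u, hu, h => by
    obtain ⟨C, hC⟩ := (finite_of_encard_eq_coe h).exists_minimal
      (nonempty_of_encard_ne_zero (by simp [h]))
    have hC𝒞 : C ∈ 𝒞 := hu.1 hC.1.1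
    have hCw : Cᶜ ∈ w := (hw.compl_mem_iff hC𝒞).2 hC.1.2
    have hCu : Minimal (· ∈ u) C := ⟨hC.1.1, fun D hD hDC =>
      hC.2 ⟨hD, fun hDw => hC.1.2 (hw.2.2.1 D hDw C hC𝒞 hDC)⟩ hDC⟩
    have hdiff : flipAt u C \ w = (u \ w) \ {C} := by
      ext D
      simp only [flipAt, mem_sdiff, mem_insert_iff, mem_singleton_iff]
      constructor
      · rintro ⟨rfl | ⟨hD, hDC⟩, hDw⟩
        exacts [absurd hCw hDw, ⟨⟨hD, hDw⟩, hDC⟩]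
      · rintro ⟨⟨hD, hDw⟩, hDC⟩
        exact ⟨.inr ⟨hD, hDC⟩, hDw⟩
    obtain ⟨f, hf0, hfn, hf⟩ := hw.exists_isWalk_of_encard_sdiff hcompl hproper n
      (isVertex_flipAt hcompl hu hCu (hproper C hC𝒞))
      (by rw [hdiff, encard_sdiff_singleton_of_mem hC.1, h]; norm_cast)
    exact ⟨_, rfl, hfn, IsWalk.cons (hf0 ▸ mk_flipAt_mem_tEdges hcompl hu hCu (hproper C hC𝒞)) hf⟩

lemma encard_sdiff_le_one_of_mem_tEdges {p : Set (Set X) × Set (Set X)} (hp : p ∈ TEdges 𝒞) :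
    (p.1 \ p.2).encard ≤ 1 := by
  obtain ⟨-, -, C, hC⟩ := hp
  rw [hC, encard_singleton]

end StructureTree

/-- For `x ∈ X` let `ρ(x) = {C ∈ 𝒞 : x ∈ C}`. Then `ρ(x) ∈ V_𝒞`, and
`d_{T_𝒞}(ρ(x), ρ(y)) = |{C ∈ 𝒞 : x ∈ C, y ∉ C}|`. -/
theorem rho_isVertex_and_dist {X : Type*} (𝒞 : Set (Set X)) (h𝒞 : Treeset 𝒞) (x y : X) :
    IsVertex 𝒞 {C | C ∈ 𝒞 ∧ x ∈ C} ∧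
    graphDist (TEdges 𝒞) {C | C ∈ 𝒞 ∧ x ∈ C} {C | C ∈ 𝒞 ∧ y ∈ C}
      = {C | C ∈ 𝒞 ∧ x ∈ C ∧ y ∉ C}.encard := by
  obtain ⟨hne, -, hcompl, hsep⟩ := h𝒞
  have hproper : ∀ C ∈ 𝒞, C ≠ univ := fun C hC => (hne C hC).2
  have hdiff : {C | C ∈ 𝒞 ∧ x ∈ C} \ {C | C ∈ 𝒞 ∧ y ∈ C} = {C | C ∈ 𝒞 ∧ x ∈ C ∧ y ∉ C} := by
    ext C
    simp only [mem_sdiff, mem_ofPred_eq]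
    tauto
  obtain ⟨n, hn⟩ := (hsep x y).exists_encard_eq_coe
  have hρx := isVertex_rho hcompl hsep x
  refine ⟨hρx, hn ▸ le_antisymm ?_ (le_graphDist fun m f hf0 hfm hf => ?_)⟩
  · obtain ⟨f, hf0, hfn, hf⟩ := (isVertex_rho hcompl hsep y).exists_isWalk_of_encard_sdiff
      hcompl hproper n hρx (hdiff ▸ hn)
    exact hf0 ▸ hfn ▸ graphDist_le_of_isWalk hf
  · simpa [← hn, ← hdiff, hf0, hfm] using
      encard_sdiff_le_of_isWalk (fun _ => encard_sdiff_le_one_of_mem_tEdges) hf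
end

section
/- Let (X,G) be a graph with uniformly bounded degrees and 𝒞 a cutset of G with sup_{C∈𝒞} diam_G(∂iv C ∪ ∂ov C) < ∞. Then there exists N ∈ ℕ such that every C ∈ 𝒞 is non-nested with at most N cuts D ∈ 𝒞 (C and D are non-nested if they lie on the same E_G-class and all four of C∩D, C∩D̄, C̄∩D, C̄∩D̄ are nonempty). -/
/-!
If `C` and `D` are non-nested, it cannot be that the vertex boundary of `D` lies on one side
of `C` and the vertex boundary of `C` on one side of `D`: the corner of `C` and `D` avoiding
both boundaries would then have no edge leaving it, although it is a nonempty proper subset of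
a connected class. So one boundary has vertices on both sides of the other cut, and a shortest
path of length `≤ r` between two of them meets the inner boundary of that cut. Hence the
boundary of every such `D` lies in the ball of radius `3r` around a fixed boundary vertex of
`C`, which has at most `(d + 1) ^ (3r)` vertices when all degrees are `≤ d`. A cut is
determined by its edge boundary, a set of pairs of vertices of that ball, so there are at most
`2 ^ ((d + 1) ^ (6r))` such `D`.
-/

open Set

/-- `E` is (the directed presentation of) a graph: symmetric and irreflexive. -/
def IsGraph {α : Type*} (E : Set (α × α)) : Prop :=
  (∀ p ∈ E, (p.2, p.1) ∈ E) ∧ ∀ x : α, (x, x) ∉ E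

/-- `(α, E)` has uniformly bounded degrees. -/
def BddDeg {α : Type*} (E : Set (α × α)) : Prop :=
  ∃ d : ℕ, ∀ x : α, {y | (x, y) ∈ E}.encard ≤ (d : ℕ∞)

/-- The `E_G`-class (connected component) of `x`. -/
def cls {α : Type*} (E : Set (α × α)) (x : α) : Set α := {y | Reach E x y}

/-- The complement `C̄ = ω ∖ C` of `C` inside the `E_G`-class(es) of its points. -/
def cCompl {α : Type*} (E : Set (α × α)) (C : Set α) : Set α :=
  {y | y ∉ C ∧ ∃ x ∈ C, Reach E x y}

/-- Inner vertex boundary `∂iv C` of a subset `C` of an `E_G`-class. -/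
def innerB {α : Type*} (E : Set (α × α)) (C : Set α) : Set α :=
  {x | x ∈ C ∧ ∃ y, y ∉ C ∧ (x, y) ∈ E}

/-- Outer vertex boundary `∂ov C = ∂iv C̄` of a subset `C` of an `E_G`-class. -/
def outerB {α : Type*} (E : Set (α × α)) (C : Set α) : Set α :=
  {y | y ∉ C ∧ ∃ x ∈ C, (y, x) ∈ E}

/-- Outer edge boundary `∂oe C = (C × C̄) ∩ E` of a subset `C` of an `E_G`-class. -/
def outerEdgeB {α : Type*} (E : Set (α × α)) (C : Set α) : Set (α × α) :=
  {p | p ∈ E ∧ p.1 ∈ C ∧ p.2 ∉ C}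

/-- A *cut* of a graph: a nonempty proper subset of an `E_G`-class with finite
edge boundary. -/
def IsCut {α : Type*} (E : Set (α × α)) (C : Set α) : Prop :=
  (∃ x₀, x₀ ∈ C ∧ C ⊆ cls E x₀ ∧ C ≠ cls E x₀) ∧ (outerEdgeB E C).Finite

/-- `diam_E(A)`, with values in `ℕ∞`. -/
noncomputable def gdiam {α : Type*} (E : Set (α × α)) (A : Set α) : ℕ∞ :=
  ⨆ x ∈ A, ⨆ y ∈ A, graphDist E x y

/-- `C` and `D` lie on the same `E_G`-class. -/
def SameClass {α : Type*} (E : Set (α × α)) (C D : Set α) : Prop :=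
  ∃ x ∈ C, ∃ y ∈ D, Reach E x y

/-- `C` and `D` are *nested* with each other (complements taken within the class). -/
def NestedPair {α : Type*} (E : Set (α × α)) (C D : Set α) : Prop :=
  C ∩ D = ∅ ∨ C ∩ cCompl E D = ∅ ∨ cCompl E C ∩ D = ∅ ∨ cCompl E C ∩ cCompl E D = ∅

lemma Nat.exists_lt_and_not_succ {p : ℕ → Prop} {n : ℕ} (h0 : p 0) (hn : ¬ p n) :
    ∃ i < n, p i ∧ ¬ p (i + 1) := by
  by_contra! h
  have hp : ∀ i ≤ n, p i := by
    intro i hi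
    induction i with
    | zero => exact h0
    | succ i ih => exact h i (by omega) (ih (by omega))
  exact hn (hp n le_rfl)

section

variable {α : Type*} {E : Set (α × α)}

namespace IsWalk

variable {f g : ℕ → α} {n m : ℕ}

lemma mono (hf : IsWalk E f n) (hm : m ≤ n) : IsWalk E f m :=
  fun i hi => hf i (hi.trans_le hm)

lemma append (hf : IsWalk E f n) (hg : IsWalk E g m) (hfg : f n = g 0) :
    ∃ h : ℕ → α, h 0 = f 0 ∧ h (n + m) = g m ∧ IsWalk E h (n + m) := by
  set h : ℕ → α := fun i => if i ≤ n then f i else g (i - n) with h_def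
  have tail : ∀ i, n ≤ i → h i = g (i - n) := by
    intro i hi
    rcases hi.eq_or_lt with rfl | hlt
    · simp [h_def, hfg]
    · simp [h_def, Nat.not_le.mpr hlt]
  refine ⟨h, by simp [h_def], by rw [tail _ (Nat.le_add_right n m), Nat.add_sub_cancel_left], ?_⟩
  intro i hi
  rcases lt_or_ge i n with hin | hin
  · simpa [h_def, hin.le, Nat.succ_le_of_lt hin] using hf i hin
  · rw [tail i hin, tail (i + 1) (by omega), Nat.sub_add_comm hin]
    exact hg (i - n) (by omega)

lemma reverse (hE : IsGraph E) (hf : IsWalk E f n) : IsWalk E (fun i => f (n - i)) n := by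
  intro i hi
  have h := hE.1 _ (hf (n - (i + 1)) (by omega))
  rwa [show n - (i + 1) + 1 = n - i by omega] at h

end IsWalk

namespace Reach

variable {x y z : α}

lemma trans (hxy : Reach E x y) (hyz : Reach E y z) : Reach E x z := by
  obtain ⟨n, f, rfl, rfl, hf⟩ := hxy
  obtain ⟨m, g, hg0, rfl, hg⟩ := hyz
  obtain ⟨h, h0, hnm, hh⟩ := hf.append hg hg0.symm
  exact ⟨n + m, h, h0, hnm, hh⟩

lemma symm (hE : IsGraph E) (h : Reach E x y) : Reach E y x := by
  obtain ⟨n, f, rfl, rfl, hf⟩ := h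
  exact ⟨n, _, by simp, by simp, hf.reverse hE⟩

lemma innerB_nonempty {S : Set α} (h : Reach E x y) (hx : x ∈ S) (hy : y ∉ S) :
    (innerB E S).Nonempty := by
  obtain ⟨n, f, rfl, rfl, hf⟩ := h
  obtain ⟨i, hi, hfi, hfi'⟩ := Nat.exists_lt_and_not_succ (p := (f · ∈ S)) hx hy
  exact ⟨f i, hfi, f (i + 1), hfi', hf i hi⟩

end Reach

lemma reach_of_mem_cls (hE : IsGraph E) {x y z : α} (hy : y ∈ cls E x) (hz : z ∈ cls E x) :
    Reach E y z :=
  (Reach.symm hE hy).trans hz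

lemma cCompl_subset_cls {C : Set α} {x : α} (hC : C ⊆ cls E x) : cCompl E C ⊆ cls E x :=
  fun _ ⟨_, _, hc, hcz⟩ => Reach.trans (hC hc) hcz

lemma graphDist_le_iff {x y : α} {m : ℕ} :
    graphDist E x y ≤ m ↔ ∃ n ≤ m, ∃ f : ℕ → α, f 0 = x ∧ f n = y ∧ IsWalk E f n := by
  constructor
  · intro h
    have hne : {d : ℕ∞ | ∃ (n : ℕ) (f : ℕ → α), d = n ∧ f 0 = x ∧ f n = y ∧ IsWalk E f n}.Nonempty := by
      by_contra hemp
      rw [not_nonempty_iff_eq_empty] at hemp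
      rw [graphDist, hemp, sInf_empty, top_le_iff] at h
      exact ENat.natCast_ne_top m h
    obtain ⟨n, f, hn, hf⟩ := csInf_mem hne
    exact ⟨n, by rw [graphDist, hn] at h; exact_mod_cast h, f, hf⟩
  · rintro ⟨n, hn, f, hf⟩
    exact (sInf_le ⟨n, f, rfl, hf⟩ : graphDist E x y ≤ n).trans (by exact_mod_cast hn)

lemma graphDist_comm (hE : IsGraph E) (x y : α) : graphDist E x y = graphDist E y x := by
  have key : ∀ x y : α, graphDist E x y ≤ graphDist E y x := by
    intro x y
    cases h : graphDist E y x using ENat.recTopCoe with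
    | top => exact le_top
    | coe m =>
      obtain ⟨n, hn, f, rfl, rfl, hf⟩ := graphDist_le_iff.1 h.le
      exact graphDist_le_iff.2 ⟨n, hn, _, by simp, by simp, hf.reverse hE⟩
  exact (key x y).antisymm (key y x)

lemma graphDist_triangle (x y z : α) :
    graphDist E x z ≤ graphDist E x y + graphDist E y z := by
  cases hxy : graphDist E x y using ENat.recTopCoe with
  | top => simp
  | coe m =>
    cases hyz : graphDist E y z using ENat.recTopCoe with
    | top => simp
    | coe k =>
      obtain ⟨n, hn, f, rfl, rfl, hf⟩ := graphDist_le_iff.1 hxy.le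
      obtain ⟨l, hl, g, hg0, rfl, hg⟩ := graphDist_le_iff.1 hyz.le
      obtain ⟨h, h0, hnl, hh⟩ := hf.append hg hg0.symm
      exact_mod_cast graphDist_le_iff.2 ⟨n + l, by omega, h, h0, hnl, hh⟩

lemma gdiam_le_iff {A : Set α} {m : ℕ∞} :
    gdiam E A ≤ m ↔ ∀ x ∈ A, ∀ y ∈ A, graphDist E x y ≤ m := by
  simp [gdiam]

lemma exists_mem_innerB_graphDist_le {C : Set α} {u v : α} {r : ℕ} (hu : u ∈ C) (hv : v ∉ C)
    (h : graphDist E u v ≤ r) : ∃ c ∈ innerB E C, graphDist E u c ≤ r := by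
  obtain ⟨n, hn, f, rfl, rfl, hf⟩ := graphDist_le_iff.1 h
  obtain ⟨i, hi, hfi, hfi'⟩ := Nat.exists_lt_and_not_succ (p := (f · ∈ C)) hu hv
  exact ⟨f i, ⟨hfi, _, hfi', hf i hi⟩, graphDist_le_iff.2 ⟨i, by omega, f, rfl, rfl, hf.mono hi.le⟩⟩

def vertexBoundary (E : Set (α × α)) (C : Set α) : Set α := innerB E C ∪ outerB E C

lemma innerB_compl (C : Set α) : innerB E Cᶜ = outerB E C := by
  ext; simp [innerB, outerB]

lemma innerB_inter_subset (P Q : Set α) :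
    innerB E (P ∩ Q) ⊆ innerB E P ∩ Q ∪ innerB E Q ∩ P := by
  rintro a ⟨⟨haP, haQ⟩, b, hb, hab⟩
  by_cases hbP : b ∈ P
  · exact Or.inr ⟨⟨haQ, b, fun hbQ => hb ⟨hbP, hbQ⟩, hab⟩, haP⟩
  · exact Or.inl ⟨⟨haP, b, hbP, hab⟩, haQ⟩

lemma outerEdgeB_subset_prod (hE : IsGraph E) (C : Set α) :
    outerEdgeB E C ⊆ vertexBoundary E C ×ˢ vertexBoundary E C := by
  rintro ⟨a, b⟩ ⟨hab, ha, hb⟩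
  exact ⟨Or.inl ⟨ha, b, hb, hab⟩, Or.inr ⟨hb, a, ha, hE.1 _ hab⟩⟩

lemma not_nestedPair_iff {C D : Set α} :
    ¬ NestedPair E C D ↔ (C ∩ D).Nonempty ∧ (C ∩ cCompl E D).Nonempty ∧
      (cCompl E C ∩ D).Nonempty ∧ (cCompl E C ∩ cCompl E D).Nonempty := by
  simp only [NestedPair, not_or, ← nonempty_iff_ne_empty]

lemma Reach.innerB_inter_nonempty {P Q : Set α} {z w : α} (h : Reach E z w) (hz : z ∈ P ∩ Q)
    (hw : w ∉ P) : (innerB E P ∩ Q ∪ innerB E Q ∩ P).Nonempty :=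
  (h.innerB_nonempty hz fun hw' => hw hw'.1).mono (innerB_inter_subset P Q)

lemma nestedPair_of_vertexBoundary_subset (hE : IsGraph E) {C D : Set α} {x₀ : α}
    (hC : C ⊆ cls E x₀) (hD : vertexBoundary E D ⊆ C ∨ vertexBoundary E D ⊆ Cᶜ)
    (hCD : vertexBoundary E C ⊆ D ∨ vertexBoundary E C ⊆ Dᶜ) : NestedPair E C D := by
  by_contra h
  obtain ⟨⟨p, hpC, hpD⟩, ⟨q, hqC, hqD⟩, ⟨s, hsC, hsD⟩, ⟨t, htC, htD⟩⟩ := not_nestedPair_iff.1 h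
  have hcls : C ∪ cCompl E C ⊆ cls E x₀ := union_subset hC (cCompl_subset_cls hC)
  have corner : ∀ {P Q : Set α} {z w : α}, z ∈ C ∪ cCompl E C → w ∈ C ∪ cCompl E C →
      z ∈ P ∩ Q → w ∉ P → (∀ a ∈ innerB E P, a ∉ Q) → (∀ a ∈ innerB E Q, a ∉ P) → False := by
    intro P Q z w hz hw hzPQ hwP hP hQ
    obtain ⟨a, ⟨ha, haQ⟩ | ⟨ha, haP⟩⟩ :=
      (reach_of_mem_cls hE (hcls hz) (hcls hw)).innerB_inter_nonempty hzPQ hwP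
    exacts [hP a ha haQ, hQ a ha haP]
  have hin (S : Set α) : innerB E S ⊆ vertexBoundary E S := subset_union_left
  have hout (S : Set α) : innerB E Sᶜ ⊆ vertexBoundary E S :=
    (innerB_compl S).trans_subset subset_union_right
  rcases hD with hD | hD <;> rcases hCD with hCD | hCD
  · exact corner (P := Cᶜ) (Q := Dᶜ) (Or.inr htC) (Or.inl hpC) ⟨htC.1, htD.1⟩ (not_not.2 hpC)
      (fun a ha => not_not.2 (hCD (hout C ha))) (fun a ha => not_not.2 (hD (hout D ha)))
  · exact corner (P := Cᶜ) (Q := D) (Or.inr hsC) (Or.inl hpC) ⟨hsC.1, hsD⟩ (not_not.2 hpC)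
      (fun a ha => hCD (hout C ha)) (fun a ha => not_not.2 (hD (hin D ha)))
  · exact corner (P := C) (Q := Dᶜ) (Or.inl hqC) (Or.inr hsC) ⟨hqC, hqD.1⟩ hsC.1
      (fun a ha => not_not.2 (hCD (hin C ha))) (fun a ha => hD (hout D ha))
  · exact corner (P := C) (Q := D) (Or.inl hpC) (Or.inr hsC) ⟨hpC, hpD⟩ hsC.1
      (fun a ha => hCD (hin C ha)) (fun a ha => hD (hin D ha))

lemma exists_vertexBoundary_graphDist_le (hE : IsGraph E) {C D : Set α} {x₀ : α} {r : ℕ}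
    (hC : C ⊆ cls E x₀) (hCr : gdiam E (vertexBoundary E C) ≤ r)
    (hDr : gdiam E (vertexBoundary E D) ≤ r) (h : ¬ NestedPair E C D) :
    ∃ c ∈ vertexBoundary E C, ∃ e ∈ vertexBoundary E D, graphDist E c e ≤ r := by
  by_cases hD : vertexBoundary E D ⊆ C ∨ vertexBoundary E D ⊆ Cᶜ
  · by_cases hCD : vertexBoundary E C ⊆ D ∨ vertexBoundary E C ⊆ Dᶜ
    · exact absurd (nestedPair_of_vertexBoundary_subset hE hC hD hCD) h
    obtain ⟨v, hv, hvD⟩ := not_subset.1 (not_or.1 hCD).1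
    obtain ⟨u, hu, huD⟩ := not_subset.1 (not_or.1 hCD).2
    obtain ⟨e, he, hue⟩ :=
      exists_mem_innerB_graphDist_le (not_not.1 huD) hvD (gdiam_le_iff.1 hCr u hu v hv)
    exact ⟨u, hu, e, Or.inl he, hue⟩
  · obtain ⟨v, hv, hvC⟩ := not_subset.1 (not_or.1 hD).1
    obtain ⟨u, hu, huC⟩ := not_subset.1 (not_or.1 hD).2
    obtain ⟨c, hc, huc⟩ :=
      exists_mem_innerB_graphDist_le (not_not.1 huC) hvC (gdiam_le_iff.1 hDr u hu v hv)
    exact ⟨c, Or.inl hc, u, hu, graphDist_comm hE c u ▸ huc⟩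

def graphBall (E : Set (α × α)) (x : α) (R : ℕ) : Set α := {y | graphDist E x y ≤ R}

lemma vertexBoundary_subset_graphBall (hE : IsGraph E) {C D : Set α} {x₀ a : α} {r : ℕ}
    (hC : C ⊆ cls E x₀) (hCr : gdiam E (vertexBoundary E C) ≤ r)
    (hDr : gdiam E (vertexBoundary E D) ≤ r) (h : ¬ NestedPair E C D)
    (ha : a ∈ vertexBoundary E C) : vertexBoundary E D ⊆ graphBall E a (3 * r) := by
  intro w hw
  obtain ⟨c, hc, e, he, hce⟩ := exists_vertexBoundary_graphDist_le hE hC hCr hDr h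
  calc graphDist E a w ≤ graphDist E a c + (graphDist E c e + graphDist E e w) :=
        (graphDist_triangle a c w).trans (add_le_add_right (graphDist_triangle c e w) _)
    _ ≤ r + (r + r) := by
        gcongr
        exacts [gdiam_le_iff.1 hCr a ha c hc, gdiam_le_iff.1 hDr e he w hw]
    _ = ↑(3 * r) := by push_cast; ring

lemma IsCut.exists_subset_cls {C : Set α} (hC : IsCut E C) :
    ∃ x₀ ∈ C, C ⊆ cls E x₀ ∧ ∃ t ∈ cls E x₀, t ∉ C := by
  obtain ⟨⟨x₀, hx₀, hsub, hne⟩, -⟩ := hC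
  exact ⟨x₀, hx₀, hsub, not_subset.1 fun h => hne (hsub.antisymm h)⟩

lemma IsCut.innerB_nonempty {C : Set α} (hC : IsCut E C) : (innerB E C).Nonempty := by
  obtain ⟨x₀, hx₀, -, t, ht, htC⟩ := hC.exists_subset_cls
  exact Reach.innerB_nonempty ht hx₀ htC

lemma IsCut.subset_of_outerEdgeB_eq (hE : IsGraph E) {D₁ D₂ : Set α} (hD₁ : IsCut E D₁)
    (heq : outerEdgeB E D₁ = outerEdgeB E D₂) : D₁ ⊆ D₂ := by
  intro z hz
  by_contra hz₂
  obtain ⟨x₀, -, hsub, t, ht, htD⟩ := hD₁.exists_subset_cls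
  obtain ⟨a, ⟨haD₁, haD₂⟩, b, hb, hab⟩ :=
    (reach_of_mem_cls hE (hsub hz) ht).innerB_nonempty (S := D₁ \ D₂) ⟨hz, hz₂⟩ (fun h => htD h.1)
  by_cases hbD₁ : b ∈ D₁
  · have hba : (b, a) ∈ outerEdgeB E D₂ := ⟨hE.1 _ hab, not_not.1 fun h => hb ⟨hbD₁, h⟩, haD₂⟩
    exact (heq ▸ hba).2.2 haD₁
  · have hab' : (a, b) ∈ outerEdgeB E D₁ := ⟨hab, haD₁, hbD₁⟩
    exact haD₂ (heq ▸ hab').2.1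

lemma injOn_outerEdgeB (hE : IsGraph E) {𝒞 : Set (Set α)} (h𝒞 : ∀ C ∈ 𝒞, IsCut E C) :
    InjOn (outerEdgeB E) 𝒞 := fun _ h₁ _ h₂ heq =>
  ((h𝒞 _ h₁).subset_of_outerEdgeB_eq hE heq).antisymm ((h𝒞 _ h₂).subset_of_outerEdgeB_eq hE heq.symm)

lemma Set.Finite.encard_biUnion_le_mul {ι : Type*} {s : Set ι} (hs : s.Finite) {t : ι → Set α}
    {m : ℕ∞} (ht : ∀ i ∈ s, (t i).encard ≤ m) : (⋃ i ∈ s, t i).encard ≤ s.encard * m :=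
  calc (⋃ i ∈ s, t i).encard ≤ ∑ i ∈ hs.toFinset, (t i).encard := by
        simpa using Finset.set_encard_biUnion_le hs.toFinset t
    _ ≤ hs.toFinset.card • m := Finset.sum_le_card_nsmul _ _ _ (by simpa using ht)
    _ = s.encard * m := by rw [hs.encard_eq_coe_toFinset_card, nsmul_eq_mul]

lemma encard_powerset_le {s : Set α} {k : ℕ} (hs : s.encard ≤ k) : (𝒫 s).encard ≤ (2 ^ k : ℕ) := by
  rw [encard_le_coe_iff_finite_ncard_le] at hs ⊢
  exact ⟨hs.1.powerset, (ncard_powerset s hs.1).trans_le (Nat.pow_le_pow_right two_pos hs.2)⟩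

lemma graphBall_succ_subset (x : α) (R : ℕ) :
    graphBall E x (R + 1) ⊆ ⋃ z ∈ graphBall E x R, insert z {y | (z, y) ∈ E} := by
  intro y hy
  obtain ⟨n, hn, f, rfl, rfl, hf⟩ := graphDist_le_iff.1 hy
  rcases Nat.lt_succ_iff_lt_or_eq.1 (Nat.lt_succ_of_le hn) with hn | rfl
  · exact mem_biUnion (graphDist_le_iff.2 ⟨n, Nat.lt_succ_iff.1 hn, f, rfl, rfl, hf⟩)
      (mem_insert _ _)
  · exact mem_biUnion (graphDist_le_iff.2 ⟨R, le_rfl, f, rfl, rfl, hf.mono R.le_succ⟩)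
      (mem_insert_of_mem _ (hf R R.lt_succ_self))

lemma encard_graphBall_le {d : ℕ} (hd : ∀ x : α, {y | (x, y) ∈ E}.encard ≤ d) (x : α) (R : ℕ) :
    (graphBall E x R).encard ≤ ((d + 1) ^ R : ℕ) := by
  induction R with
  | zero =>
    refine (encard_le_encard fun y hy => ?_).trans (encard_singleton x).le
    obtain ⟨n, hn, f, rfl, rfl, -⟩ := graphDist_le_iff.1 hy
    rw [Nat.le_zero.1 hn, mem_singleton_iff]
  | succ R ih =>
    calc (graphBall E x (R + 1)).encard
        ≤ (⋃ z ∈ graphBall E x R, insert z {y | (z, y) ∈ E}).encard :=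
          encard_le_encard (graphBall_succ_subset x R)
      _ ≤ (graphBall E x R).encard * (d + 1 : ℕ) :=
          (encard_le_coe_iff.1 ih).1.encard_biUnion_le_mul fun z _ =>
            (encard_insert_le _ _).trans (by push_cast; exact add_le_add_left (hd z) 1)
      _ ≤ ((d + 1) ^ R : ℕ) * (d + 1 : ℕ) := by gcongr
      _ = ((d + 1) ^ (R + 1) : ℕ) := by push_cast; ring

end

/-- If `𝒞` is a cutset of a bounded-degree graph with
`sup_{C∈𝒞} diam_G(∂iv C ∪ ∂ov C) < ∞`, then there is `N` such that each `C ∈ 𝒞` is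
non-nested with at most `N` cuts `D ∈ 𝒞`. -/
theorem bdd_many_nonnested_cuts {X : Type*} (G : Set (X × X))
    (hG : IsGraph G) (hdeg : BddDeg G)
    (𝒞 : Set (Set X)) (hcut : ∀ C ∈ 𝒞, IsCut G C)
    (r : ℕ) (hbdd : ∀ C ∈ 𝒞, gdiam G (innerB G C ∪ outerB G C) ≤ (r : ℕ∞)) :
    ∃ N : ℕ, ∀ C ∈ 𝒞,
      {D | D ∈ 𝒞 ∧ SameClass G C D ∧ (C ∩ D).Nonempty ∧ (C ∩ cCompl G D).Nonempty ∧
        (cCompl G C ∩ D).Nonempty ∧ (cCompl G C ∩ cCompl G D).Nonempty}.encard ≤ (N : ℕ∞) := by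
  obtain ⟨d, hd⟩ := hdeg
  refine ⟨2 ^ ((d + 1) ^ (3 * r) * (d + 1) ^ (3 * r)), fun C hC => ?_⟩
  obtain ⟨x₀, -, hCx₀, -⟩ := (hcut C hC).exists_subset_cls
  obtain ⟨a, ha⟩ := (hcut C hC).innerB_nonempty
  set B := graphBall G a (3 * r)
  have hB : (B ×ˢ B).encard ≤ ((d + 1) ^ (3 * r) * (d + 1) ^ (3 * r) : ℕ) := by
    rw [encard_prod, Nat.cast_mul]
    exact mul_le_mul' (encard_graphBall_le hd a _) (encard_graphBall_le hd a _)
  have hmaps : ∀ D ∈ 𝒞, ¬ NestedPair G C D → outerEdgeB G D ∈ 𝒫 (B ×ˢ B) := by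
    intro D hD hCD
    have hDB := vertexBoundary_subset_graphBall hG hCx₀ (hbdd C hC) (hbdd D hD) hCD (Or.inl ha)
    exact (outerEdgeB_subset_prod hG D).trans (prod_mono hDB hDB)
  calc _ = _ := ((injOn_outerEdgeB hG hcut).mono fun D hD => hD.1).encard_image.symm
    _ ≤ (𝒫 (B ×ˢ B)).encard := encard_le_encard <| image_subset_iff.2
        fun D hD => hmaps D hD.1 (not_nestedPair_iff.2 hD.2.2)
    _ ≤ _ := encard_powerset_le hB
end
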